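/- arXiv:1901.09000 — 2 statements merged into one kernel-verified Lean document; each statement's English description precedes it below -/
import Mathlib

section
/- Let g : ℝ≥0 → ℝ≥0 be a non-increasing function with limit g_∞ = lim_{s→∞} g(s). Then for every r ∈ ℝ, the averaged integral (1/Vol B(R)) ∫_{x ∈ B(R)} g((d⁻_R(x) − r)⁺) dx converges to g_∞ as R → ∞, where B(R) = [−R,R]^d and d⁻_R(x) is the distance from x to ∂B(R), and (·)⁺ denotes the positive part. -/
/-!
Rescaling by `x = R • y` turns the average over `B(R)` into the average over `B(1)` of
`g ((R * d⁻_1(y) - r)⁺)`, since `d⁻_R(R • y) = R * d⁻_1(y)`. Off the frontier of `B(1)`, a null set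
because the cube is convex, `d⁻_1(y) > 0`, so the integrand tends to `g_∞`; it is bounded by
monotonicity of `g`, and dominated convergence gives the limit.
-/

open MeasureTheory Filter Topology

/-- The cube `[-R,R]^d` in Euclidean space. -/
def cube (d : ℕ) (R : ℝ) : Set (EuclideanSpace ℝ (Fin d)) := {x | ∀ i, |x i| ≤ R}

open Metric Set Pointwise

section
variable {G₀ α : Type*} [GroupWithZero G₀] [MulAction G₀ α] [TopologicalSpace α]
  [ContinuousConstSMul G₀ α]

theorem frontier_smul₀ {c : G₀} (hc : c ≠ 0) (s : Set α) : frontier (c • s) = c • frontier s :=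
  ((Homeomorph.smulOfNeZero c hc).image_frontier s).symm

end

theorem infDist_smul₀_frontier_smul₀ {𝕜 E : Type*} [NormedField 𝕜] [NormedAddCommGroup E]
    [NormedSpace 𝕜 E] {c : 𝕜} (hc : c ≠ 0) (s : Set E) (x : E) :
    infDist (c • x) (frontier (c • s)) = ‖c‖ * infDist x (frontier s) := by
  rw [frontier_smul₀ hc, infDist_smul₀ hc]

theorem infDist_frontier_pos_of_mem_interior {X : Type*} [PseudoMetricSpace X] {s : Set X}
    {x : X} (hs : (frontier s).Nonempty) (hx : x ∈ interior s) : 0 < infDist x (frontier s) := by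
  rw [← infDist_pos_iff_notMem_closure hs, isClosed_frontier.closure_eq]
  exact fun h => h.2 hx

theorem Convex.ae_restrict_mem_interior {E : Type*} [NormedAddCommGroup E] [NormedSpace ℝ E]
    [MeasurableSpace E] [BorelSpace E] [FiniteDimensional ℝ E] (μ : Measure E) [μ.IsAddHaarMeasure]
    {s : Set E} (hs : Convex ℝ s) : ∀ᵐ x ∂μ.restrict s, x ∈ interior s := by
  filter_upwards [ae_restrict_mem₀ (hs.nullMeasurableSet μ),
    ae_restrict_of_ae (measure_eq_zero_iff_ae_notMem.1 (hs.addHaar_frontier μ))] with x hxs hxf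
  exact self_sdiff_frontier s ▸ ⟨hxs, hxf⟩

theorem Antitone.tendsto_integral_comp_mul_sub {α : Type*} [MeasurableSpace α]
    {μ : Measure α} [IsFiniteMeasure μ] {G : ℝ → ℝ} (hG : Antitone G) {c : ℝ}
    (hGc : Tendsto G atTop (𝓝 c)) {δ : α → ℝ} (hδ : Measurable δ) (hδ_pos : ∀ᵐ x ∂μ, 0 < δ x)
    (r : ℝ) :
    Tendsto (fun R => ∫ x, G (R * δ x - r) ∂μ) atTop (𝓝 (μ.real univ * c)) := by
  rw [← smul_eq_mul, ← integral_const]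
  refine tendsto_integral_filter_of_dominated_convergence (fun _ => max |c| |G (-r)|)
    (Eventually.of_forall fun R =>
      (hG.measurable.comp ((hδ.const_mul R).sub_const r)).aestronglyMeasurable)
    ?_ (integrable_const _) ?_
  · filter_upwards [eventually_ge_atTop 0] with R hR
    filter_upwards [hδ_pos] with x hx
    exact abs_le_max_abs_abs (hG.le_of_tendsto hGc _) (hG (by nlinarith))
  · filter_upwards [hδ_pos] with x hx
    exact hGc.comp (tendsto_atTop_add_const_right _ _ (tendsto_id.atTop_mul_const hx))

section Cube

variable {d : ℕ}

theorem cube_eq_smul_cube_one {R : ℝ} (hR : 0 < R) : cube d R = R • cube d 1 := by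
  ext x
  simp [mem_smul_set_iff_inv_smul_mem₀ hR.ne', cube, abs_mul, abs_of_pos hR, inv_mul_le_iff₀ hR]

theorem convex_cube (R : ℝ) : Convex ℝ (cube d R) := by
  intro x hx y hy a b ha hb hab i
  calc |a * x i + b * y i| ≤ a * |x i| + b * |y i| := by
        simpa [abs_of_nonneg ha, abs_of_nonneg hb] using abs_add_le (a * x i) (b * y i)
    _ ≤ a * R + b * R := by gcongr <;> simp_all [cube]
    _ = R := by rw [← add_mul, hab, one_mul]

theorem volume_cube {R : ℝ} (hR : 0 ≤ R) : volume (cube d R) = ENNReal.ofReal ((2 * R) ^ d) := by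
  have hpre : cube d R
      = (MeasurableEquiv.toLp 2 (Fin d → ℝ)).symm ⁻¹' (univ.pi fun _ => Icc (-R) R) := by
    ext x
    simp [cube, abs_le, Pi.le_def, forall_and]
  rw [hpre, (EuclideanSpace.volume_preserving_symm_measurableEquiv_toLp (Fin d)).measure_preimage
    (MeasurableSet.univ_pi fun _ => measurableSet_Icc).nullMeasurableSet, volume_pi_pi]
  simp only [Real.volume_Icc, Finset.prod_const, Finset.card_univ, Fintype.card_fin]
  rw [← ENNReal.ofReal_pow (by linarith), sub_neg_eq_add, two_mul]

theorem frontier_cube_nonempty (hd : 1 ≤ d) {R : ℝ} (hR : 0 ≤ R) :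
    (frontier (cube d R)).Nonempty := by
  refine nonempty_frontier_iff.2 ⟨⟨0, by simp [cube, hR]⟩, fun h => ?_⟩
  have := (h ▸ mem_univ (WithLp.toLp 2 fun _ => R + 1) : _ ∈ cube d R) ⟨0, hd⟩
  norm_num [abs_of_pos (by linarith : 0 < R + 1)] at this

theorem setIntegral_cube_div {R : ℝ} (hR : 0 < R) (f : EuclideanSpace ℝ (Fin d) → ℝ) :
    (∫ x in cube d R, f x) / (2 * R) ^ d = (∫ y in cube d 1, f (R • y)) / 2 ^ d := by
  rw [Measure.setIntegral_comp_smul_of_pos volume f _ hR, ← cube_eq_smul_cube_one hR,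
    finrank_euclideanSpace_fin, smul_eq_mul, mul_pow]
  field_simp

end Cube

theorem mean_conservation_stmt0_general (d : ℕ) (hd : 1 ≤ d)
    (g : ℝ → ℝ) (hanti : AntitoneOn g (Set.Ici 0))
    (ginf : ℝ) (hlim : Tendsto g atTop (𝓝 ginf)) (r : ℝ) :
    Tendsto (fun R : ℝ =>
        (∫ x in cube d R, g (max (Metric.infDist x (frontier (cube d R)) - r) 0)) / (2 * R) ^ d)
      atTop (𝓝 ginf) := by
  set G : ℝ → ℝ := fun s => g (max s 0)
  have hG : Antitone G := fun s t hst =>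
    hanti (le_max_right s 0) (le_max_right t 0) (max_le_max_right 0 hst)
  have hGlim : Tendsto G atTop (𝓝 ginf) :=
    hlim.comp (tendsto_atTop_mono (le_max_left · 0) tendsto_id)
  have hδ_pos : ∀ᵐ y ∂volume.restrict (cube d 1), 0 < infDist y (frontier (cube d 1)) := by
    filter_upwards [(convex_cube 1).ae_restrict_mem_interior volume] with y hy
    exact infDist_frontier_pos_of_mem_interior (frontier_cube_nonempty hd zero_le_one) hy
  have : IsFiniteMeasure (volume.restrict (cube d 1)) :=
    isFiniteMeasure_restrict.2 (by simp [volume_cube])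
  have hI := (hG.tendsto_integral_comp_mul_sub hGlim (continuous_infDist_pt _).measurable
    hδ_pos r).div_const (2 ^ d)
  rw [measureReal_restrict_apply_univ, measureReal_def, volume_cube zero_le_one,
    ENNReal.toReal_ofReal (by positivity), mul_one, mul_div_cancel_left₀ _ (by positivity)] at hI
  refine hI.congr' ?_
  filter_upwards [eventually_gt_atTop 0] with R hR
  simp_rw [setIntegral_cube_div hR, cube_eq_smul_cube_one hR, infDist_smul₀_frontier_smul₀ hR.ne',
    Real.norm_of_nonneg hR.le]
  rfl

/-- Lemma: for a non-increasing `g : [0,∞) → [0,∞)` with limit `g∞` at infinity,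
the average over the cube `B(R) = [-R,R]^d` of `g((d⁻_R(x) - r)⁺)` converges to `g∞`,
where `d⁻_R(x)` is the distance from `x` to `∂B(R)`. -/
theorem mean_conservation_stmt0 (d : ℕ) (hd : 1 ≤ d)
    (g : ℝ → ℝ) (hg0 : ∀ s, 0 ≤ s → 0 ≤ g s) (hanti : AntitoneOn g (Set.Ici 0))
    (ginf : ℝ) (hlim : Tendsto g atTop (𝓝 ginf)) (r : ℝ) :
    Tendsto (fun R : ℝ =>
        (∫ x in cube d R, g (max (Metric.infDist x (frontier (cube d R)) - r) 0)) / (2 * R) ^ d)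
      atTop (𝓝 ginf) :=
  mean_conservation_stmt0_general d hd g hanti ginf hlim r
end

section
/- Let (X_R)_{R>0} be nonnegative integer-valued random variables and v(R) → ∞ a deterministic function, with c > 0 a constant. Assume: (i) X_R/v(R) → c in probability; (ii) the lower concentration property: for every ε > 0, P(X_R/v(R) < c − ε) = o(1/v(R)); and (iii) v(R) = O(R^d) for the normalization. Then E[ (v(R)/X_R)·1_{X_R > 0} ] → 1/c as R → ∞, and in fact the convergence holds in mean: E| (v(R)/X_R)·1_{X_R>0} − 1/c | → 0. -/
open MeasureTheory Filter Topology

/-!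
Write `Z = X / v`. Because `0⁻¹ = 0` in Lean, `(v / X) · 1_{X > 0}` is exactly `Z⁻¹`, and
integrality of `X` gives `|Z⁻¹| ≤ v`. Fix `0 < ε < c` and split the sample space into three
events. Where `|Z - c| ≤ ε`, `|Z⁻¹ - c⁻¹| ≤ ε / (c (c - ε))`. Where `Z ≥ c - ε` but `|Z - c| > ε`,
both `Z⁻¹` and `c⁻¹` lie in `[0, (c - ε)⁻¹]`, and this event has vanishing probability. Where
`Z < c - ε`, the only available bound is `|Z⁻¹ - c⁻¹| ≤ v + (c - ε)⁻¹`, which is why lower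
concentration at rate `o(1 / v)` is needed. Letting first `R → ∞` and then `ε → 0` gives
`E |Z⁻¹ - c⁻¹| → 0`.
-/

theorem abs_inv_sub_inv_le_of_abs_sub_le {z c ε : ℝ} (hεc : ε < c) (hz : |z - c| ≤ ε) :
    |z⁻¹ - c⁻¹| ≤ ε / (c * (c - ε)) := by
  have hcε : 0 < c - ε := sub_pos.mpr hεc
  have hzc : c - ε ≤ z := by linarith [neg_abs_le (z - c)]
  have hz0 : 0 < z := hcε.trans_le hzc
  have hc0 : 0 < c := by linarith [abs_nonneg (z - c)]
  rw [inv_sub_inv hz0.ne' hc0.ne', abs_div, abs_sub_comm, abs_of_pos (mul_pos hz0 hc0),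
    mul_comm z c]
  exact div_le_div₀ (by linarith [abs_nonneg (z - c)]) hz (by positivity)
    (mul_le_mul_of_nonneg_left hzc hc0.le)

theorem abs_inv_sub_inv_le_of_abs_inv_le {z c ε B : ℝ} (hε : 0 < ε) (hεc : ε < c)
    (hB : |z⁻¹| ≤ B) :
    |z⁻¹ - c⁻¹| ≤ ε / (c * (c - ε)) + (if ε < |z - c| then (c - ε)⁻¹ else 0)
      + (if z < c - ε then B else 0) := by
  have hcε : 0 < c - ε := sub_pos.mpr hεc
  have hc_inv : c⁻¹ ≤ (c - ε)⁻¹ := inv_anti₀ hcε (by linarith)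
  have hδ : 0 ≤ ε / (c * (c - ε)) := div_nonneg hε.le (mul_pos (hε.trans hεc) hcε).le
  by_cases hlow : z < c - ε
  · have hfar : ε < |z - c| := by
      rw [abs_sub_comm]; exact lt_of_lt_of_le (by linarith) (le_abs_self _)
    simp only [hfar, hlow, if_true]
    have htri := abs_sub (z⁻¹) c⁻¹
    rw [abs_of_pos (inv_pos.mpr (hε.trans hεc))] at htri
    linarith
  · push Not at hlow
    simp only [not_lt.mpr hlow, if_false, add_zero]
    by_cases hfar : ε < |z - c|
    · have hz_inv : z⁻¹ ≤ (c - ε)⁻¹ := inv_anti₀ hcε hlow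
      have hz_inv_nonneg : 0 ≤ z⁻¹ := inv_nonneg.mpr (hcε.le.trans hlow)
      have hc_inv_nonneg : 0 ≤ c⁻¹ := inv_nonneg.mpr (hε.trans hεc).le
      simp only [hfar, if_true]
      rw [abs_sub_le_iff]
      constructor <;> linarith
    · simp only [hfar, if_false, add_zero]
      exact abs_inv_sub_inv_le_of_abs_sub_le hεc (not_lt.mp hfar)

section Integral

variable {Ω : Type*} [MeasurableSpace Ω] (μ : Measure Ω) [IsProbabilityMeasure μ]

theorem integral_abs_inv_sub_inv_le {Z : Ω → ℝ} (hZ : Measurable Z) {B c ε : ℝ}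
    (hB : ∀ ω, |(Z ω)⁻¹| ≤ B) (hε : 0 < ε) (hεc : ε < c) :
    ∫ ω, |(Z ω)⁻¹ - c⁻¹| ∂μ ≤ ε / (c * (c - ε)) + (c - ε)⁻¹ * μ.real {ω | ε < |Z ω - c|}
      + B * μ.real {ω | Z ω < c - ε} := by
  have hfar : MeasurableSet {ω | ε < |Z ω - c|} :=
    measurableSet_lt measurable_const (hZ.sub_const c).abs
  have hlow : MeasurableSet {ω | Z ω < c - ε} := measurableSet_lt hZ measurable_const
  have hfar_int := (integrable_const (μ := μ) (c - ε)⁻¹).indicator hfar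
  have hlow_int := (integrable_const (μ := μ) B).indicator hlow
  have hδ_far_int : Integrable (fun ω => ε / (c * (c - ε))
      + {ω | ε < |Z ω - c|}.indicator (fun _ => (c - ε)⁻¹) ω) μ :=
    (integrable_const _).add hfar_int
  have hlhs_int : Integrable (fun ω => |(Z ω)⁻¹ - c⁻¹|) μ :=
    ((Integrable.of_bound hZ.inv.aestronglyMeasurable B
      (ae_of_all _ fun ω => (Real.norm_eq_abs _).trans_le (hB ω))).sub
      (integrable_const _)).abs
  calc ∫ ω, |(Z ω)⁻¹ - c⁻¹| ∂μ
      ≤ ∫ ω, ε / (c * (c - ε)) + {ω | ε < |Z ω - c|}.indicator (fun _ => (c - ε)⁻¹) ω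
          + {ω | Z ω < c - ε}.indicator (fun _ => B) ω ∂μ := by
        refine integral_mono hlhs_int (hδ_far_int.add hlow_int)
          fun ω => ?_
        simpa only [Set.indicator_apply, Set.mem_ofPred_eq] using
          abs_inv_sub_inv_le_of_abs_inv_le hε hεc (hB ω)
    _ = _ := by
        rw [integral_add hδ_far_int hlow_int,
          integral_add (integrable_const _) hfar_int, integral_const,
          integral_indicator_const _ hfar, integral_indicator_const _ hlow]
        simp only [probReal_univ, smul_eq_mul, mul_one, mul_comm]

end Integral

section Family

variable {ι : Type*} {l : Filter ι} {Ω : ι → Type*} [∀ i, MeasurableSpace (Ω i)]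
  (μ : ∀ i, Measure (Ω i)) [∀ i, IsProbabilityMeasure (μ i)]

theorem tendsto_integral_abs_inv_sub_inv {Z : ∀ i, Ω i → ℝ} (hZ : ∀ i, Measurable (Z i))
    {B : ι → ℝ} (hB : ∀ i ω, |(Z i ω)⁻¹| ≤ B i) {c : ℝ} (hc : 0 < c)
    (hprob : ∀ ε > 0, Tendsto (fun i => (μ i).real {ω | ε < |Z i ω - c|}) l (𝓝 0))
    (hlower : ∀ ε > 0, Tendsto (fun i => B i * (μ i).real {ω | Z i ω < c - ε}) l (𝓝 0)) :
    Tendsto (fun i => ∫ ω, |(Z i ω)⁻¹ - c⁻¹| ∂μ i) l (𝓝 0) := by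
  refine tendsto_order.2 ⟨fun a ha => Eventually.of_forall fun i =>
    ha.trans_le (integral_nonneg fun _ => abs_nonneg _), fun η hη => ?_⟩
  have hδ : Tendsto (fun ε => ε / (c * (c - ε))) (𝓝[>] 0) (𝓝 0) := by
    have : ContinuousAt (fun ε : ℝ => ε / (c * (c - ε))) 0 :=
      continuousAt_id.div (continuousAt_const.mul (continuousAt_const.sub continuousAt_id))
        (by simpa using hc.ne')
    simpa using this.tendsto.mono_left nhdsWithin_le_nhds
  obtain ⟨ε, hεη, hε, hεc⟩ :=
    ((hδ.eventually (gt_mem_nhds hη)).and (Ioo_mem_nhdsGT hc)).exists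
  have htail := ((hprob ε hε).const_mul (c - ε)⁻¹).add (hlower ε hε)
  rw [mul_zero, zero_add] at htail
  filter_upwards [htail.eventually (gt_mem_nhds (sub_pos.mpr hεη))] with i hi
  linarith [integral_abs_inv_sub_inv_le (μ i) (hZ i) (hB i) hε hεc]

theorem tendsto_integral_of_tendsto_integral_abs_sub {Y : ∀ i, Ω i → ℝ}
    (hY : ∀ i, Integrable (Y i) (μ i)) {a : ℝ}
    (h : Tendsto (fun i => ∫ ω, |Y i ω - a| ∂μ i) l (𝓝 0)) :
    Tendsto (fun i => ∫ ω, Y i ω ∂μ i) l (𝓝 a) := by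
  rw [tendsto_iff_norm_sub_tendsto_zero]
  refine squeeze_zero (fun _ => norm_nonneg _) (fun i => ?_) h
  calc ‖∫ ω, Y i ω ∂μ i - a‖ = ‖∫ ω, (Y i ω - a) ∂μ i‖ := by
        rw [integral_sub (hY i) (integrable_const a), integral_const, probReal_univ, one_smul]
    _ ≤ _ := norm_integral_le_integral_norm _

end Family

theorem empirical_mean_convergence_general
    (Ω : ℝ → Type*) [∀ R, MeasureSpace (Ω R)]
    [∀ R, IsProbabilityMeasure (volume : Measure (Ω R))]
    (X : ∀ R : ℝ, Ω R → ℕ) (hmeas : ∀ R, Measurable (X R))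
    (v : ℝ → ℝ) (c : ℝ) (hc : 0 < c)
    (hv_pos : ∀ R, 0 < v R)
    (hprob : ∀ ε > 0,
      Tendsto (fun R => (volume {ω : Ω R | ε < |(X R ω : ℝ) / v R - c|}).toReal)
        atTop (𝓝 0))
    (hlower : ∀ ε > 0,
      Tendsto (fun R => v R * (volume {ω : Ω R | (X R ω : ℝ) / v R < c - ε}).toReal)
        atTop (𝓝 0)) :
    Tendsto (fun R => ∫ ω, (if 0 < X R ω then v R / (X R ω : ℝ) else 0))
      atTop (𝓝 (1 / c)) ∧
    Tendsto (fun R => ∫ ω, |(if 0 < X R ω then v R / (X R ω : ℝ) else 0) - 1 / c|)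
      atTop (𝓝 0) := by
  have hZ : ∀ R, Measurable fun ω => (X R ω : ℝ) / v R :=
    fun R => (measurable_from_top.comp (hmeas R)).div_const _
  have hY : ∀ R ω, (if 0 < X R ω then v R / (X R ω : ℝ) else 0) = ((X R ω : ℝ) / v R)⁻¹ := by
    intro R ω
    split_ifs with h
    · rw [inv_div]
    · simp [Nat.eq_zero_of_not_pos h]
  have hB : ∀ R ω, |((X R ω : ℝ) / v R)⁻¹| ≤ v R := by
    intro R ω
    rw [← hY]
    split_ifs with h
    · rw [abs_of_nonneg (div_nonneg (hv_pos R).le (Nat.cast_nonneg _))]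
      exact div_le_self (hv_pos R).le (Nat.one_le_cast.mpr h)
    · simpa using (hv_pos R).le
  have hL1 := tendsto_integral_abs_inv_sub_inv (fun R => volume) hZ hB hc hprob hlower
  simp only [hY, one_div]
  refine ⟨tendsto_integral_of_tendsto_integral_abs_sub (fun R => volume) (fun R => ?_) hL1, hL1⟩
  exact Integrable.of_bound (hZ R).inv.aestronglyMeasurable (v R)
    (ae_of_all _ fun ω => (Real.norm_eq_abs _).trans_le (hB R ω))

/-- If nonnegative integer-valued random variables `X_R` satisfy `X_R / v(R) → c > 0`
in probability, the lower concentration property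
`P(X_R / v(R) < c - ε) = o(1/v(R))`, and `v(R) = O(R^d)`, then
`E[(v(R)/X_R)·1_{X_R>0}] → 1/c`, and indeed the convergence holds in mean. -/
theorem empirical_mean_convergence (d : ℕ)
    (Ω : ℝ → Type*) [∀ R, MeasureSpace (Ω R)]
    [∀ R, IsProbabilityMeasure (volume : Measure (Ω R))]
    (X : ∀ R : ℝ, Ω R → ℕ) (hmeas : ∀ R, Measurable (X R))
    (v : ℝ → ℝ) (c Cgr : ℝ) (hc : 0 < c) (hCgr : 0 < Cgr)
    (hv_pos : ∀ R, 0 < v R) (hv_top : Tendsto v atTop atTop)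
    (hv_growth : ∀ R > 0, v R ≤ Cgr * R ^ d)
    (hprob : ∀ ε > 0,
      Tendsto (fun R => (volume {ω : Ω R | ε < |(X R ω : ℝ) / v R - c|}).toReal)
        atTop (𝓝 0))
    (hlower : ∀ ε > 0,
      Tendsto (fun R => v R * (volume {ω : Ω R | (X R ω : ℝ) / v R < c - ε}).toReal)
        atTop (𝓝 0)) :
    Tendsto (fun R => ∫ ω, (if 0 < X R ω then v R / (X R ω : ℝ) else 0))
      atTop (𝓝 (1 / c)) ∧
    Tendsto (fun R => ∫ ω, |(if 0 < X R ω then v R / (X R ω : ℝ) else 0) - 1 / c|)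
      atTop (𝓝 0) :=
  empirical_mean_convergence_general Ω X hmeas v c hc hv_pos hprob hlower
end
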